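/- arXiv:2506.11321 — 6 statements merged into one kernel-verified Lean document; each statement's English description precedes it below -/
import Mathlib

section
/- Let S be a monoid, a ∈ S, and let l_a denote the left congruence on S generated by the single pair (a, 1). Then for all u, v ∈ S, (u, v) ∈ l_a if and only if there exist natural numbers m, n ≥ 0 such that u·a^m = v·a^n. -/
/-- A left congruence on a monoid: an equivalence relation compatible with
left multiplication. -/
def IsLeftCongruence {S : Type*} [Monoid S] (r : S → S → Prop) : Prop :=
  Equivalence r ∧ ∀ s u v : S, r u v → r (s * u) (s * v)

/-- Membership in the left congruence generated by a set `Y` of pairs. -/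
def LeftCongruenceGen {S : Type*} [Monoid S] (Y : Set (S × S)) (u v : S) : Prop :=
  ∀ r : S → S → Prop, IsLeftCongruence r → (∀ p ∈ Y, r p.1 p.2) → r u v

theorem left_congruence_gen_pair_one {S : Type*} [Monoid S] (a : S) (u v : S) :
    LeftCongruenceGen {((a, 1) : S × S)} u v ↔ ∃ m n : ℕ, u * a ^ m = v * a ^ n := by
  constructor
  · intro h
    refine h (fun x y => ∃ m n : ℕ, x * a ^ m = y * a ^ n) ?_ ?_
    · refine ⟨⟨fun x => ⟨0, 0, rfl⟩, ?_, ?_⟩, ?_⟩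
      · rintro x y ⟨m, n, h⟩; exact ⟨n, m, h.symm⟩
      · rintro x y z ⟨m, n, h1⟩ ⟨p, q, h2⟩
        refine ⟨m + p, q + n, ?_⟩
        calc x * a ^ (m + p) = (x * a ^ m) * a ^ p := by rw [pow_add, mul_assoc]
          _ = (y * a ^ n) * a ^ p := by rw [h1]
          _ = (y * a ^ p) * a ^ n := by rw [mul_assoc, mul_assoc, ← pow_add, ← pow_add, add_comm]
          _ = (z * a ^ q) * a ^ n := by rw [h2]
          _ = z * a ^ (q + n) := by rw [pow_add, mul_assoc]
      · rintro s x y ⟨m, n, h⟩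
        exact ⟨m, n, by rw [mul_assoc, h, mul_assoc]⟩
    · rintro p hp
      rw [Set.mem_singleton_iff] at hp
      subst hp
      exact ⟨0, 1, by simp⟩
  · rintro ⟨m, n, h⟩ r hr hgen
    have ha : r a 1 := hgen (a, 1) rfl
    have key : ∀ (w : S) (k : ℕ), r (w * a ^ k) w := by
      intro w k
      induction k with
      | zero => simpa using hr.1.refl w
      | succ k ih =>
        have := hr.2 (w * a ^ k) a 1 ha
        rw [mul_one] at this
        refine hr.1.trans ?_ ih
        rw [pow_succ, ← mul_assoc]
        exact this
    have h1 : r u (u * a ^ m) := hr.1.symm (key u m)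
    have h2 : r (v * a ^ n) v := key v n
    rw [← h] at h2
    exact hr.1.trans h1 h2
end

section
/- Let M be a monoid containing elements a and b such that: (1) for all u, v ∈ M, if u·b·a^n = v·b·a^m for some m, n ≥ 0 then u·b·a^n = v·b·a^n; and (2) for each i ≥ 1 there exist u_i, v_i ∈ M with u_i·b·a^i = v_i·b·a^i but u_i·b·a^{i-1} ≠ v_i·b·a^{i-1}. Then the left congruence λ_{a,b} = {(u,v) ∈ M × M : u·b·a^m = v·b·a^n for some m, n ≥ 0} on M is not finitely generated. -/
/-- Lemma `lem:m=n`: under conditions (1) and (2), the left congruence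
`λ_{a,b} = {(u,v) : u b a^m = v b a^n for some m, n}` is not finitely generated. -/
theorem lambda_not_finitely_generated {M : Type*} [Monoid M] (a b : M)
    (h1 : ∀ u v : M, ∀ m n : ℕ, u * b * a ^ n = v * b * a ^ m → u * b * a ^ n = v * b * a ^ n)
    (h2 : ∀ i : ℕ, 1 ≤ i → ∃ u v : M,
      u * b * a ^ i = v * b * a ^ i ∧ u * b * a ^ (i - 1) ≠ v * b * a ^ (i - 1)) :
    ¬ ∃ Y : Set (M × M), Y.Finite ∧
      ∀ u v : M, (∃ m n : ℕ, u * b * a ^ m = v * b * a ^ n) ↔ LeftCongruenceGen Y u v := by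
  rintro ⟨Y, hfin, hiff⟩
  -- every pair in Y is equal at some exponent
  have hext : ∀ x y : M, ∀ k N : ℕ, k ≤ N → x * b * a ^ k = y * b * a ^ k →
      x * b * a ^ N = y * b * a ^ N := by
    intro x y k N hk h
    have : x * b * a ^ k * a ^ (N - k) = y * b * a ^ k * a ^ (N - k) := by rw [h]
    simpa [mul_assoc, ← pow_add, Nat.add_sub_cancel' hk] using this
  have hY : ∀ p ∈ Y, ∃ k : ℕ, p.1 * b * a ^ k = p.2 * b * a ^ k := by
    intro p hp
    have hgen : LeftCongruenceGen Y p.1 p.2 := fun r _ hr => hr p hp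
    obtain ⟨m, n, h⟩ := (hiff p.1 p.2).mpr hgen
    exact ⟨m, h1 p.1 p.2 n m h⟩
  classical
  set N : ℕ := hfin.toFinset.sup
    (fun p => if h : ∃ k : ℕ, p.1 * b * a ^ k = p.2 * b * a ^ k then Nat.find h else 0) with hN
  have hYN : ∀ p ∈ Y, p.1 * b * a ^ N = p.2 * b * a ^ N := by
    intro p hp
    have hex := hY p hp
    have hle : Nat.find hex ≤ N := by
      have := Finset.le_sup (f := fun p : M × M =>
        if h : ∃ k : ℕ, p.1 * b * a ^ k = p.2 * b * a ^ k then Nat.find h else 0)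
        (hfin.mem_toFinset.mpr hp)
      simpa [dif_pos hex] using this
    exact hext p.1 p.2 _ N hle (Nat.find_spec hex)
  obtain ⟨u, v, heq, hne⟩ := h2 (N + 1) (by omega)
  have hgen : LeftCongruenceGen Y u v := (hiff u v).mp ⟨N + 1, N + 1, heq⟩
  have := hgen (fun x y => x * b * a ^ N = y * b * a ^ N)
    ⟨⟨fun _ => rfl, fun h => h.symm, fun h h' => h.trans h'⟩,
     fun s x y h => by simp only [mul_assoc] at h ⊢; rw [h]⟩ hYN
  simpa using hne (by simpa using this)
end

section
/- Let M be a monoid and x ∈ M an element such that the elements 1, x, x², … form a strictly descending chain in the R-order of M (i.e., x^{i+1}M ⊊ x^i M for all i ≥ 0; in particular all powers x^i are distinct and x^j ∈ x^i M iff j ≥ i). Let T ⊆ M be the set {x^t : t an odd triangular number}, and work in S(M) = P(M) ⋊ M with product (X,u)(Y,v) = (X ∪ uY, uv). Set a = (T, x²) and b = ({1}, x). Then for all (U, u), (V, v) ∈ S(M) and all m, n ≥ 0: if a^n b (U, u) = a^m b (V, v), then m = n. -/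
/-- The multiplication `(X,u)(Y,v) = (X ∪ uY, uv)` on `𝒮(M) = 𝒫(M) × M`. -/
def sMul {M : Type*} [Monoid M] (p q : Set M × M) : Set M × M :=
  (p.1 ∪ (fun m => p.2 * m) '' q.1, p.2 * q.2)

/-- `aPowB a b n = aⁿ·b` in `𝒮(M)`. -/
def aPowB {M : Type*} [Monoid M] (a b : Set M × M) : ℕ → Set M × M
  | 0 => b
  | n + 1 => sMul a (aPowB a b n)

section Aux

variable {M : Type*} [Monoid M] (x : M)

lemma chain_le (hchain : ∀ i : ℕ,
      (Set.range fun m : M => x ^ (i + 1) * m) ⊂ Set.range fun m : M => x ^ i * m)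
    {i j : ℕ} (h : x ^ i ∈ Set.range fun m : M => x ^ j * m) : j ≤ i := by
  by_contra hlt
  push_neg at hlt
  have hanti : StrictAnti (fun i : ℕ => Set.range fun m : M => x ^ i * m) :=
    strictAnti_nat_of_succ_lt hchain
  obtain ⟨m, hm⟩ := h
  have hsub : (Set.range fun c : M => x ^ i * c) ⊆ Set.range fun c : M => x ^ j * c := by
    rintro _ ⟨c, rfl⟩
    exact ⟨m * c, by show x ^ j * (m * c) = x ^ i * c; rw [← mul_assoc]; exact congrArg (· * c) hm⟩
  have hlt' := hanti hlt
  exact absurd (hsub.antisymm hlt'.le) hlt'.ne'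

lemma pow_inj_of_chain (hchain : ∀ i : ℕ,
      (Set.range fun m : M => x ^ (i + 1) * m) ⊂ Set.range fun m : M => x ^ i * m)
    {i j : ℕ} (h : x ^ i = x ^ j) : i = j := by
  have h1 : j ≤ i := chain_le x hchain ⟨1, by show x ^ j * 1 = x ^ i; rw [mul_one, h]⟩
  have h2 : i ≤ j := chain_le x hchain ⟨1, by show x ^ i * 1 = x ^ j; rw [mul_one, ← h]⟩
  omega

lemma aPowB_snd (T : Set M) (n : ℕ) :
    (aPowB (T, x ^ 2) ({(1 : M)}, x) n).2 = x ^ (2 * n + 1) := by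
  induction n with
  | zero => simp [aPowB]
  | succ n ih =>
    show (x ^ 2) * (aPowB (T, x ^ 2) ({(1 : M)}, x) n).2 = _
    rw [ih, ← pow_add]
    congr 1
    omega

lemma aPowB_fst (T : Set M) (hT : ∀ y ∈ T, ∃ t : ℕ, Odd t ∧ y = x ^ t) (n : ℕ) :
    x ^ (2 * n) ∈ (aPowB (T, x ^ 2) ({(1 : M)}, x) n).1 ∧
    ∀ y ∈ (aPowB (T, x ^ 2) ({(1 : M)}, x) n).1,
      ∃ e : ℕ, y = x ^ e ∧ (Odd e ∨ e = 2 * n) := by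
  induction n with
  | zero =>
    constructor
    · simp [aPowB]
    · rintro y hy
      simp only [aPowB, Set.mem_singleton_iff] at hy
      exact ⟨0, by simp [hy], Or.inr rfl⟩
  | succ n ih =>
    constructor
    · show x ^ (2 * (n + 1)) ∈ T ∪ (fun m => x ^ 2 * m) '' _
      right
      refine ⟨x ^ (2 * n), ih.1, ?_⟩
      show x ^ 2 * x ^ (2 * n) = _
      rw [← pow_add]
      congr 1
      omega
    · rintro y (hyT | ⟨z, hz, rfl⟩)
      · obtain ⟨t, ht, rfl⟩ := hT y hyT
        exact ⟨t, rfl, Or.inl ht⟩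
      · obtain ⟨e, rfl, he⟩ := ih.2 z hz
        refine ⟨2 + e, by show x ^ 2 * x ^ e = x ^ (2 + e); rw [pow_add], ?_⟩
        rcases he with he | he
        · obtain ⟨k, hk⟩ := he
          exact Or.inl ⟨k + 1, by omega⟩
        · exact Or.inr (by omega)

end Aux

/-- Proposition `prop:triangle`, key step: with `T = {x^t : t an odd triangular number}`,
`a = (T, x²)` and `b = ({1}, x)` in `𝒮(M)`, if `aⁿ b (U,u) = aᵐ b (V,v)` then `m = n`,
provided the powers of `x` form a strictly descending chain in the `R`-order of `M`. -/
theorem triangle_powers_equal {M : Type*} [Monoid M] (x : M)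
    (hchain : ∀ i : ℕ,
      (Set.range fun m : M => x ^ (i + 1) * m) ⊂ Set.range fun m : M => x ^ i * m) :
    ∀ (U V : Set M) (u v : M) (m n : ℕ),
      sMul (aPowB ({y : M | ∃ t k : ℕ, t = k * (k + 1) / 2 ∧ Odd t ∧ y = x ^ t}, x ^ 2)
          ({(1 : M)}, x) n) (U, u)
        = sMul (aPowB ({y : M | ∃ t k : ℕ, t = k * (k + 1) / 2 ∧ Odd t ∧ y = x ^ t}, x ^ 2)
          ({(1 : M)}, x) m) (V, v)
      → m = n := by
  intro U V u v m n heq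
  set T : Set M := {y : M | ∃ t k : ℕ, t = k * (k + 1) / 2 ∧ Odd t ∧ y = x ^ t} with hTdef
  have hT : ∀ y ∈ T, ∃ t : ℕ, Odd t ∧ y = x ^ t := by
    rintro y ⟨t, k, -, ht, rfl⟩
    exact ⟨t, ht, rfl⟩
  have hfst := congrArg Prod.fst heq
  simp only [sMul] at hfst
  rw [aPowB_snd x T n, aPowB_snd x T m] at hfst
  -- key step: if x^(2j) belongs to the i-side, then i = j or 2i+1 ≤ 2j
  have key : ∀ (i j : ℕ) (W : Set M),
      x ^ (2 * j) ∈ (aPowB (T, x ^ 2) ({(1 : M)}, x) i).1 ∪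
        (fun c => x ^ (2 * i + 1) * c) '' W → i = j ∨ 2 * i + 1 ≤ 2 * j := by
    rintro i j W (hmem | ⟨z, -, hz⟩)
    · obtain ⟨e, he, hor⟩ := (aPowB_fst x T hT i).2 _ hmem
      have : 2 * j = e := pow_inj_of_chain x hchain he
      rcases hor with hodd | rfl
      · obtain ⟨k, hk⟩ := hodd
        omega
      · left; omega
    · right
      exact chain_le x hchain ⟨z, hz⟩
  have h1 : m = n ∨ 2 * m + 1 ≤ 2 * n := by
    apply key m n V
    rw [← hfst]
    exact Or.inl (aPowB_fst x T hT n).1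
  have h2 : n = m ∨ 2 * n + 1 ≤ 2 * m := by
    apply key n m U
    rw [hfst]
    exact Or.inl (aPowB_fst x T hT m).1
  omega
end

section
/- Let X be a set, F_X the free group on X, and let Z be the free commutative idempotent monoid (free semilattice with identity) on the set of generators {y_{x,h} : x ∈ X, h ∈ F_X}. For a nonempty word w = x₁x₂⋯x_n ∈ X⁺ and h ∈ F_X define τ_{w,h} := y_{x₁,h} · y_{x₂,hx₁} ⋯ y_{x_n, hx₁⋯x_{n-1}} ∈ Z. Then for w, v ∈ X⁺ and h ∈ F_X: τ_{v,h} is a factor of τ_{w,1} in Z (i.e., τ_{w,1} = τ_{v,h}·z for some z ∈ Z) if and only if h is (the image in F_X of) a word in X* and there exists u ∈ X* with w = hvu as words in X*. Moreover, in that case, if h = 1 then τ_{w,1} = τ_{v,1}·τ_{u,v}, and if h ∈ X⁺ then τ_{w,1} = τ_{h,1}·τ_{v,h}·τ_{u,hv}. -/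
open Classical in
/-- `tauZ w h = τ_{w,h} = y_{x₁,h} y_{x₂,hx₁} ⋯ y_{x_n,hx₁⋯x_{n-1}}`, an element of the
free semilattice-with-identity `Z` on the generators `y_{x,h}` (modelled as finite
subsets of `X × F_X` under union, a generator being a singleton). -/
noncomputable def tauZ {X : Type*} : List X → FreeGroup X → Finset (X × FreeGroup X)
  | [], _ => ∅
  | x :: rest, h => insert (x, h) (tauZ rest (h * FreeGroup.of x))

/-- The embedding of the free monoid `X*` (words) into the free group `F_X`. -/
def wordToFree {X : Type*} (l : List X) : FreeGroup X :=
  (l.map FreeGroup.of).prod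

/-!
The pairs in `τ_{w,g}` are the letters of `w`, each tagged with `g` times the prefix of `w`
preceding it; so `(x, g p) ∈ τ_{w,g}` exactly when `x` occurs in `w` right after the prefix `p`.
If `τ_{v,h} ⊆ τ_{w,1}`, the first letter of `v` sits after a prefix `p` of `w` with `h = p`, and
since `X*` embeds in `F_X` the tags of the following letters of `v` force them to be the
following letters of `w`. The factorisations all come from `τ_{ab,g} = τ_{a,g} τ_{b,ga}`.
-/

theorem FreeGroup.isReduced_map_true {α : Type*} (l : List α) :
    FreeGroup.IsReduced (l.map (·, true)) :=
  (List.isChain_map _).2 (List.isChain_iff_getElem.2 fun _ _ _ => rfl)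

section

variable {X : Type*}

@[simp]
lemma wordToFree_nil : wordToFree ([] : List X) = 1 := rfl

@[simp]
lemma wordToFree_cons (x : X) (l : List X) :
    wordToFree (x :: l) = FreeGroup.of x * wordToFree l := by
  simp [wordToFree]

@[simp]
lemma wordToFree_append (a b : List X) :
    wordToFree (a ++ b) = wordToFree a * wordToFree b := by
  simp [wordToFree]

lemma wordToFree_eq_mk (l : List X) :
    wordToFree l = FreeGroup.mk (l.map (·, true)) := by
  induction l with
  | nil => rfl
  | cons x l ih => rw [wordToFree_cons, ih, FreeGroup.of, FreeGroup.mul_mk]; rfl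

lemma wordToFree_injective : Function.Injective (wordToFree (X := X)) := by
  classical
  intro a b hab
  have := congrArg FreeGroup.toWord hab
  rw [wordToFree_eq_mk, wordToFree_eq_mk, FreeGroup.toWord_mk, FreeGroup.toWord_mk,
    (FreeGroup.isReduced_map_true a).reduce_eq, (FreeGroup.isReduced_map_true b).reduce_eq] at this
  exact List.map_injective_iff.2 (fun x y hxy => congrArg Prod.fst hxy) this

open Classical

lemma tauZ_append (a b : List X) (g : FreeGroup X) :
    tauZ (a ++ b) g = tauZ a g ∪ tauZ b (g * wordToFree a) := by
  induction a generalizing g with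
  | nil => simp [tauZ]
  | cons x a ih =>
    simp only [List.cons_append, tauZ, ih, Finset.insert_union, wordToFree_cons, mul_assoc]

lemma mem_tauZ {x : X} {g' : FreeGroup X} (w : List X) (g : FreeGroup X) :
    (x, g') ∈ tauZ w g ↔ ∃ p s : List X, w = p ++ x :: s ∧ g' = g * wordToFree p := by
  induction w generalizing g with
  | nil => simp [tauZ]
  | cons y w ih =>
    simp only [tauZ, Finset.mem_insert, Prod.mk.injEq, ih]
    constructor
    · rintro (⟨rfl, rfl⟩ | ⟨p, s, rfl, rfl⟩)
      · exact ⟨[], w, rfl, by simp⟩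
      · exact ⟨y :: p, s, rfl, by simp [mul_assoc]⟩
    · rintro ⟨_ | ⟨z, p⟩, s, hps, rfl⟩ <;> simp only [List.nil_append, List.cons_append,
        List.cons.injEq] at hps
      · exact Or.inl ⟨hps.1.symm, by simp⟩
      · obtain ⟨rfl, rfl⟩ := hps
        exact Or.inr ⟨p, s, rfl, by simp [mul_assoc]⟩

lemma exists_eq_append_of_tauZ_subset {v w : List X} (hv : v ≠ []) {g h : FreeGroup X}
    (hsub : tauZ v h ⊆ tauZ w g) :
    ∃ p u : List X, h = g * wordToFree p ∧ w = p ++ v ++ u := by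
  induction v generalizing h with
  | nil => exact absurd rfl hv
  | cons x v ih =>
    obtain ⟨p, s, rfl, rfl⟩ := (mem_tauZ (x := x) (g' := h) w g).1
      (hsub (by simp [tauZ]))
    rcases eq_or_ne v [] with rfl | hv'
    · exact ⟨p, s, rfl, by simp⟩
    obtain ⟨p', u, hp', hw⟩ := ih hv' ((Finset.subset_insert _ _).trans hsub)
    have hp'_eq : p' = p ++ [x] := wordToFree_injective <| mul_left_cancel (a := g) <| by
      simp [← hp', mul_assoc]
    exact ⟨p, u, rfl, by simpa [hp'_eq] using hw⟩

end

open Classical in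
theorem tau_factor_iff_general {X : Type*} (w v : List X) (hv : v ≠ [])
    (h : FreeGroup X) :
    ((∃ z : Finset (X × FreeGroup X), tauZ w 1 = tauZ v h ∪ z) ↔
      ∃ p u : List X, h = wordToFree p ∧ w = p ++ v ++ u) ∧
    (∀ p u : List X, h = wordToFree p → w = p ++ v ++ u →
      (p = [] → tauZ w 1 = tauZ v 1 ∪ tauZ u (wordToFree v)) ∧
      (p ≠ [] → tauZ w 1 = tauZ p 1 ∪ tauZ v h ∪ tauZ u (h * wordToFree v))) := by
  have factor : ∀ p u : List X, h = wordToFree p → w = p ++ v ++ u →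
      tauZ w 1 = tauZ p 1 ∪ tauZ v h ∪ tauZ u (h * wordToFree v) := by
    rintro p u rfl rfl
    rw [tauZ_append, tauZ_append, wordToFree_append, one_mul, one_mul]
  refine ⟨⟨fun ⟨z, hz⟩ => ?_, fun ⟨p, u, hp, hw⟩ => ?_⟩,
    fun p u hp hw => ⟨?_, fun _ => factor p u hp hw⟩⟩
  · have hsub : tauZ v h ⊆ tauZ w 1 := hz ▸ Finset.subset_union_left
    simpa only [one_mul] using exists_eq_append_of_tauZ_subset hv hsub
  · exact ⟨tauZ p 1 ∪ tauZ u (h * wordToFree v), by rw [factor p u hp hw]; ac_rfl⟩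
  · rintro rfl
    simpa [hp, tauZ] using factor [] u hp hw

open Classical in
/-- Lemma `lem:tauprod`: `τ_{v,h}` is a factor of `τ_{w,1}` in `Z` iff `h ∈ X*` and
`w = hvu` for some `u ∈ X*`; moreover in that case `τ_{w,1} = τ_{v,1} τ_{u,v}` if `h = 1`
and `τ_{w,1} = τ_{h,1} τ_{v,h} τ_{u,hv}` if `h ∈ X⁺`. -/
theorem tau_factor_iff {X : Type*} (w v : List X) (hw : w ≠ []) (hv : v ≠ [])
    (h : FreeGroup X) :
    ((∃ z : Finset (X × FreeGroup X), tauZ w 1 = tauZ v h ∪ z) ↔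
      ∃ p u : List X, h = wordToFree p ∧ w = p ++ v ++ u) ∧
    (∀ p u : List X, h = wordToFree p → w = p ++ v ++ u →
      (p = [] → tauZ w 1 = tauZ v 1 ∪ tauZ u (wordToFree v)) ∧
      (p ≠ [] → tauZ w 1 = tauZ p 1 ∪ tauZ v h ∪ tauZ u (h * wordToFree v))) :=
  tau_factor_iff_general w v hv h
end

section
/- Let S be a monoid with a set E of commuting idempotents such that E is right unitary in S (for e ∈ E and a ∈ S, if ae ∈ E then a ∈ E), and suppose S is left E-adequate: every element w ∈ S has an element w⁺ ∈ E with w⁺ R* w, where a R* b means ua = va ⟺ ub = vb for all u, v ∈ S. Then: if e, t, x, y, w ∈ S satisfy e = tx, e² = e, e ∈ E, and xw = yw, it follows that ty ∈ E. -/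
/-- The relation `R*` on a monoid: `a R* b` iff `ua = va ⟺ ub = vb` for all `u, v`. -/
def RStar {S : Type*} [Monoid S] (a b : S) : Prop :=
  ∀ u v : S, u * a = v * a ↔ u * b = v * b

/-- Lemma `lem:cond2,3c`(1): in a left `E`-adequate monoid with `E` right unitary, if
`e = tx` is an idempotent of `E` and `xw = yw`, then `ty ∈ E`. -/
theorem ty_in_E_of_right_unitary {S : Type*} [Monoid S] (E : Set S)
    (hidem : ∀ e ∈ E, e * e = e)
    (hcomm : ∀ e ∈ E, ∀ f ∈ E, e * f = f * e)
    (hunitary : ∀ e ∈ E, ∀ a : S, a * e ∈ E → a ∈ E)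
    (hadequate : ∀ w : S, ∃ f ∈ E, RStar f w) :
    ∀ e t x y w : S, e = t * x → e * e = e → e ∈ E → x * w = y * w → t * y ∈ E := by
  intro e t x y w he hee heE hxw
  obtain ⟨f, hfE, hRf⟩ := hadequate w
  -- from xw = yw, get x f = y f
  have hxf : x * f = y * f := (hRf x y).mpr hxw
  -- (t*y)*f = e*f
  have key : (t * y) * f = e * f := by
    rw [mul_assoc, ← hxf, ← mul_assoc, ← he]
  -- e*f is idempotent
  have hefidem : (e * f) * (e * f) = e * f := by
    have hc : f * e = e * f := hcomm f hfE e heE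
    rw [mul_assoc, ← mul_assoc f e f, hc, mul_assoc e f f, hidem f hfE, ← mul_assoc, hee]
  -- get g ∈ E with g R* (e*f); then (e*f)*g = g ∈ E, so e*f ∈ E by unitarity
  obtain ⟨g, hgE, hRg⟩ := hadequate (e * f)
  have hg : (e * f) * g = g := by
    have := (hRg (e * f) 1).mpr (by rw [one_mul]; exact hefidem)
    rwa [one_mul] at this
  have hefE : e * f ∈ E := hunitary g hgE (e * f) (by rw [hg]; exact hgE)
  exact hunitary f hfE (t * y) (by rw [key]; exact hefE)
end

section
/- Let S be a monoid with a set E of commuting idempotents, and suppose S is E-adequate: every element a ∈ S has a⁺ ∈ E with a⁺ R* a and a* ∈ E with a* L* a (where a L* b means au = av ⟺ bu = bv for all u, v, and R* is dual), and each L*-class and each R*-class contains a unique element of E. Then for all x, y, w ∈ S: if xw = yw and x*·w = w, then y*·w = w. -/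
/-- The relation `L*` on a monoid: `a L* b` iff `au = av ⟺ bu = bv` for all `u, v`. -/
def LStar {S : Type*} [Monoid S] (a b : S) : Prop :=
  ∀ u v : S, a * u = a * v ↔ b * u = b * v

/-- Lemma `lem:cond2,3c`(2): in an `E`-adequate monoid, if `xw = yw` and `x* w = w`,
then `y* w = w`. -/
theorem star_fix_of_E_adequate {S : Type*} [Monoid S] (E : Set S)
    (hidem : ∀ e ∈ E, e * e = e)
    (hcomm : ∀ e ∈ E, ∀ f ∈ E, e * f = f * e)
    (star plus : S → S)
    (hstarE : ∀ a : S, star a ∈ E)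
    (hstarL : ∀ a : S, LStar (star a) a)
    (hstar_uniq : ∀ a : S, ∀ e ∈ E, LStar e a → e = star a)
    (hplusE : ∀ a : S, plus a ∈ E)
    (hplusR : ∀ a : S, RStar (plus a) a)
    (hplus_uniq : ∀ a : S, ∀ e ∈ E, RStar e a → e = plus a) :
    ∀ x y w : S, x * w = y * w → star x * w = w → star y * w = w := by

  intro x y w hxw hxstar
  set p := plus w with hp
  set f := star x with hf
  set g := star y with hg
  have hpE := hplusE w
  have hgE := hstarE y
  have hpw : p * w = w := by
    have h := (hplusR w p 1).mp (by simpa using hidem p hpE)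
    simpa using h
  have hxp : x * p = y * p := (hplusR w x y).mpr hxw
  have hfp : f * p = p := by
    have h := (hplusR w f 1).mpr (by simpa using hxstar)
    simpa using h
  have key : ∀ u v : S, p * u = p * v ↔ g * (p * u) = g * (p * v) := by
    intro u v
    constructor
    · intro h
      have h1 : x * (p * u) = x * (p * v) := by
        exact (hstarL x (p * u) (p * v)).mp (by show f * (p*u) = f * (p*v); rw [← mul_assoc, ← mul_assoc, hfp, h])
      have h2 : y * (p * u) = y * (p * v) := by
        rw [← mul_assoc, ← mul_assoc, ← hxp, mul_assoc, mul_assoc, h1]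
      exact (hstarL y (p * u) (p * v)).mpr h2
    · intro h
      have h2 : y * (p * u) = y * (p * v) := (hstarL y (p * u) (p * v)).mp h
      have h1 : x * (p * u) = x * (p * v) := by
        rw [← mul_assoc, ← mul_assoc, hxp, mul_assoc, mul_assoc, h2]
      have hthis : f * (p * u) = f * (p * v) := (hstarL x (p * u) (p * v)).mpr h1
      calc p * u = f * p * u := by rw [hfp]
        _ = f * p * v := by rw [mul_assoc, mul_assoc, hthis]
        _ = p * v := by rw [hfp]
  have hpg : p = p * g := by
    have h := (key 1 g).mpr ?_
    · simpa using h
    · show g * (p * 1) = g * (p * g)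
      rw [mul_one, ← hcomm g hgE p hpE, ← mul_assoc, hidem g hgE]
  have hgp : g * p = p := by rw [hcomm g hgE p hpE, ← hpg]
  calc g * w = g * (p * w) := by rw [hpw]
    _ = g * p * w := by rw [mul_assoc]
    _ = w := by rw [hgp, hpw]
end
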